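/- arXiv:math/9610222 — 2 statements merged into one kernel-verified Lean document; each statement's English description precedes it below -/
import Mathlib

section
/- Let f be a Lorenz map with branches f_- : [P,0] → [P,Q] and f_+ : [0,Q] → [P,Q], both continuous and strictly increasing, with f(P)=P and f(Q)=Q. If f is trivial, i.e. f([P,0]) does not contain [P,0] or f([0,Q]) does not contain [0,Q], then every orbit of f converges to a fixed point of f. -/
/-!
Triviality forces, by the intermediate value theorem, `f₋(0) < 0` or `f₊(0) > 0`. In the first
case `[P,0)` is forward invariant, in the second `[0,Q]` is; either way every orbit either stays in
one of the two laps forever or eventually enters the invariant one and never leaves it. From then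
on it is an orbit of a single continuous increasing branch, hence monotone, hence convergent, and
by continuity the limit is a fixed point of that branch.
-/

open Set Filter Topology Function

section Recurrence

variable {α : Type*} {s : Set α} {g : α → α} {u : ℕ → α}

theorem monotone_or_antitone_of_monotoneOn_of_rec [LinearOrder α] (hg : MonotoneOn g s)
    (hu : ∀ n, u n ∈ s) (hrec : ∀ n, u (n + 1) = g (u n)) : Monotone u ∨ Antitone u := by
  rcases le_total (u 0) (u 1) with h01 | h10
  · refine Or.inl (monotone_nat_of_le_succ fun n => ?_)
    induction n with
    | zero => exact h01
    | succ n ih => simpa only [hrec] using hg (hu n) (hu (n + 1)) ih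
  · refine Or.inr (antitone_nat_of_succ_le fun n => ?_)
    induction n with
    | zero => exact h10
    | succ n ih => simpa only [hrec] using hg (hu (n + 1)) (hu n) ih

theorem eq_of_tendsto_of_rec [TopologicalSpace α] [T2Space α] {y : α}
    (hg : ContinuousWithinAt g s y) (hu : ∀ n, u n ∈ s) (hrec : ∀ n, u (n + 1) = g (u n))
    (hy : Tendsto u atTop (𝓝 y)) : g y = y := by
  have hgu : Tendsto (fun n => g (u n)) atTop (𝓝 (g y)) :=
    hg.tendsto.comp (tendsto_nhdsWithin_iff.2 ⟨hy, .of_forall hu⟩)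
  have hshift : Tendsto (fun n => g (u n)) atTop (𝓝 y) := by
    simpa only [hrec] using (tendsto_add_atTop_iff_nat 1).2 hy
  exact tendsto_nhds_unique hgu hshift

variable [ConditionallyCompleteLinearOrder α] [TopologicalSpace α] [OrderTopology α] {a b : α}

theorem exists_tendsto_of_monotone_or_antitone_of_mem_Icc (hu : ∀ n, u n ∈ Icc a b)
    (hmono : Monotone u ∨ Antitone u) : ∃ y, Tendsto u atTop (𝓝 y) := by
  rcases hmono with hmono | hanti
  · exact ⟨_, tendsto_atTop_ciSup hmono ⟨b, by rintro _ ⟨n, rfl⟩; exact (hu n).2⟩⟩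
  · exact ⟨_, tendsto_atTop_ciInf hanti ⟨a, by rintro _ ⟨n, rfl⟩; exact (hu n).1⟩⟩

theorem exists_fixed_tendsto_of_rec_mem_Icc (hc : ContinuousOn g (Icc a b))
    (hm : MonotoneOn g (Icc a b)) (hu : ∀ n, u n ∈ Icc a b) (hrec : ∀ n, u (n + 1) = g (u n)) :
    ∃ y, g y = y ∧ Tendsto u atTop (𝓝 y) := by
  obtain ⟨y, hy⟩ := exists_tendsto_of_monotone_or_antitone_of_mem_Icc hu
    (monotone_or_antitone_of_monotoneOn_of_rec hm hu hrec)
  have hyI : y ∈ Icc a b := isClosed_Icc.mem_of_tendsto hy (.of_forall hu)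
  exact ⟨y, eq_of_tendsto_of_rec (hc y hyI) hu hrec hy, hy⟩

theorem exists_fixed_tendsto_iterate_of_eventually_mem {f : α → α} (hsI : s ⊆ Icc a b)
    (hfg : EqOn f g s) (hc : ContinuousOn g (Icc a b)) (hm : MonotoneOn g (Icc a b)) {x : α}
    (hx : ∀ᶠ n in atTop, f^[n] x ∈ s) : ∃ y, g y = y ∧ Tendsto (fun n => f^[n] x) atTop (𝓝 y) := by
  obtain ⟨N, hN⟩ := eventually_atTop.1 hx
  have hmem : ∀ n, f^[n + N] x ∈ s := fun n => hN _ (Nat.le_add_left N n)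
  obtain ⟨y, hgy, hy⟩ := exists_fixed_tendsto_of_rec_mem_Icc (u := fun n => f^[n + N] x) hc hm
    (fun n => hsI (hmem n))
    (fun n => by rw [add_right_comm, iterate_succ_apply', hfg (hmem n)])
  exact ⟨y, hgy, (tendsto_add_atTop_iff_nat N).1 hy⟩

end Recurrence

theorem eventually_iterate_mem_or_of_mapsTo {α : Type*} {f : α → α} {s t : Set α}
    (hs : MapsTo f s s) {x : α} (hst : ∀ n, f^[n] x ∈ s ∪ t) :
    (∀ᶠ n in atTop, f^[n] x ∈ s) ∨ ∀ᶠ n in atTop, f^[n] x ∈ t := by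
  by_cases h : ∃ N, f^[N] x ∈ s
  · obtain ⟨N, hN⟩ := h
    refine Or.inl (eventually_atTop.2 ⟨N, fun n hn => ?_⟩)
    obtain ⟨k, rfl⟩ := Nat.exists_eq_add_of_le' hn
    rw [iterate_add_apply]
    exact hs.iterate k hN
  · exact Or.inr (.of_forall fun n => (hst n).resolve_left (not_exists.1 h n))

section IntermediateValue

variable {α : Type*} [ConditionallyCompleteLinearOrder α] [TopologicalSpace α] [OrderTopology α]
  [DenselyOrdered α] {g : α → α} {a b : α}

theorem map_right_lt_of_not_Icc_subset_image (hab : a ≤ b) (hc : ContinuousOn g (Icc a b))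
    (ha : g a ≤ a) (h : ¬ Icc a b ⊆ g '' Icc a b) : g b < b := by
  by_contra! hb
  exact h ((Icc_subset_Icc ha hb).trans (intermediate_value_Icc hab hc))

theorem lt_map_left_of_not_Icc_subset_image (hab : a ≤ b) (hc : ContinuousOn g (Icc a b))
    (hb : b ≤ g b) (h : ¬ Icc a b ⊆ g '' Icc a b) : a < g a := by
  by_contra! ha
  exact h ((Icc_subset_Icc ha hb).trans (intermediate_value_Icc hab hc))

end IntermediateValue

/-- **A trivial Lorenz map has all orbits converging to fixed points.**
If `(fm, fp)` is a Lorenz map on `[P,Q]` which is trivial, i.e. `fm([P,0]) ⊉ [P,0]` or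
`fp([0,Q]) ⊉ [0,Q]`, then every orbit converges to a fixed point of (a branch of) the map. -/
theorem trivial_lorenz_orbits_converge
    (P Q : ℝ) (hP : P < 0) (hQ : 0 < Q) (fm fp : ℝ → ℝ)
    (hcm : ContinuousOn fm (Icc P 0)) (hcp : ContinuousOn fp (Icc 0 Q))
    (hmm : StrictMonoOn fm (Icc P 0)) (hmp : StrictMonoOn fp (Icc 0 Q))
    (hmapm : MapsTo fm (Icc P 0) (Icc P Q)) (hmapp : MapsTo fp (Icc 0 Q) (Icc P Q))
    (hfixP : fm P = P) (hfixQ : fp Q = Q)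
    (f : ℝ → ℝ) (hf : ∀ x, f x = if x < 0 then fm x else fp x)
    (htrivial : ¬ Icc P 0 ⊆ fm '' Icc P 0 ∨ ¬ Icc 0 Q ⊆ fp '' Icc 0 Q)
    (x : ℝ) (hx : x ∈ Icc P Q) :
    ∃ y : ℝ, (fm y = y ∨ fp y = y) ∧
      Tendsto (fun n => f^[n] x) atTop (nhds y) := by
  have hfm : EqOn f fm (Ico P 0) := fun z hz => by rw [hf, if_pos hz.2]
  have hfp : EqOn f fp (Icc 0 Q) := fun z hz => by rw [hf, if_neg (not_lt.2 hz.1)]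
  have hmaps : MapsTo f (Icc P Q) (Icc P Q) := by
    intro z hz
    rcases lt_or_ge z 0 with hz0 | hz0
    · rw [hfm ⟨hz.1, hz0⟩]; exact hmapm ⟨hz.1, hz0.le⟩
    · rw [hfp ⟨hz0, hz.2⟩]; exact hmapp ⟨hz0, hz.2⟩
  have horbit (n : ℕ) : f^[n] x ∈ Ico P 0 ∪ Icc 0 Q := by
    rw [Ico_union_Icc_eq_Icc hP.le hQ.le]; exact hmaps.iterate n hx
  have of_eventually_left (h : ∀ᶠ n in atTop, f^[n] x ∈ Ico P 0) :
      ∃ y, (fm y = y ∨ fp y = y) ∧ Tendsto (fun n => f^[n] x) atTop (𝓝 y) :=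
    (exists_fixed_tendsto_iterate_of_eventually_mem Ico_subset_Icc_self hfm hcm hmm.monotoneOn
      h).imp fun _ => And.imp_left Or.inl
  have of_eventually_right (h : ∀ᶠ n in atTop, f^[n] x ∈ Icc 0 Q) :
      ∃ y, (fm y = y ∨ fp y = y) ∧ Tendsto (fun n => f^[n] x) atTop (𝓝 y) :=
    (exists_fixed_tendsto_iterate_of_eventually_mem Subset.rfl hfp hcp hmp.monotoneOn
      h).imp fun _ => And.imp_left Or.inr
  rcases htrivial with hm0 | hp0
  · replace hm0 := map_right_lt_of_not_Icc_subset_image hP.le hcm hfixP.le hm0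
    have hinv : MapsTo f (Ico P 0) (Ico P 0) := fun z hz => by
      rw [hfm hz]
      exact ⟨(hmapm (Ico_subset_Icc_self hz)).1,
        (hmm.monotoneOn (Ico_subset_Icc_self hz) ⟨hP.le, le_rfl⟩ hz.2.le).trans_lt hm0⟩
    exact (eventually_iterate_mem_or_of_mapsTo hinv horbit).elim
      of_eventually_left of_eventually_right
  · replace hp0 := lt_map_left_of_not_Icc_subset_image hQ.le hcp hfixQ.ge hp0
    have hinv : MapsTo f (Icc 0 Q) (Icc 0 Q) := fun z hz => by
      rw [hfp hz]
      exact ⟨hp0.le.trans (hmp.monotoneOn ⟨le_rfl, hQ.le⟩ hz hz.1), (hmapp hz).2⟩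
    exact (eventually_iterate_mem_or_of_mapsTo hinv fun n => (horbit n).symm).elim
      of_eventually_right of_eventually_left
end

section
/- Let f and g be Lorenz maps such that their kneading sequences agree up to length n (K_n^±(f) = K_n^±(g)) and such that for all i ≤ n, f^i(0_±)=0 if and only if g^i(0_±)=0. Then there exists an orientation preserving homeomorphism h : [-1,1] → [-1,1] such that for every k ≤ n and every branch I of f^k, h(I) is a branch of g^k and the words agree: ω(I,f) = ω(h(I),g). -/
open Set Filter

noncomputable section

/-- The full Lorenz map glued from the two branches (left branch on `x < 0`). -/
def lorenzGlue (fm fp : ℝ → ℝ) : ℝ → ℝ := fun x => if x < 0 then fm x else fp x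

/-- `(fm, fp)` is a Lorenz map on `[-1,1]`: continuous strictly increasing branches,
mapping into `[-1,1]`, fixing the endpoints `±1`. -/
def IsLorenzPair (fm fp : ℝ → ℝ) : Prop :=
  ContinuousOn fm (Icc (-1) 0) ∧ ContinuousOn fp (Icc 0 1) ∧
  StrictMonoOn fm (Icc (-1) 0) ∧ StrictMonoOn fp (Icc 0 1) ∧
  MapsTo fm (Icc (-1) 0) (Icc (-1) 1) ∧ MapsTo fp (Icc 0 1) (Icc (-1) 1) ∧
  fm (-1) = -1 ∧ fp 1 = 1

/-- No point of `S` is mapped to the critical point `0` by `f^[i]` for `i < n`;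
this is the combinatorial meaning of "`f^n` is monotone on `S`". -/
def noCut (f : ℝ → ℝ) (n : ℕ) (S : Set ℝ) : Prop :=
  ∀ x ∈ S, ∀ i < n, f^[i] x ≠ 0

/-- `[a,b]` is a branch of `f^n`: a maximal closed interval in `[-1,1]` on whose
interior `f^n` is monotone (no cut point of order `< n`). -/
def IsBranch (f : ℝ → ℝ) (n : ℕ) (a b : ℝ) : Prop :=
  -1 ≤ a ∧ a < b ∧ b ≤ 1 ∧ noCut f n (Ioo a b) ∧
  ∀ a' b' : ℝ, -1 ≤ a' → b' ≤ 1 → a' ≤ a → b ≤ b' → noCut f n (Ioo a' b') → a' = a ∧ b' = b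

/-- The word `w ∈ {L,R}^n` (here `false = L`, `true = R`) is the itinerary word
of the interval `(a,b)` for `f^n`. -/
def HasWord (f : ℝ → ℝ) (n : ℕ) (a b : ℝ) (w : ℕ → Bool) : Prop :=
  ∀ i < n, (w i = false → f^[i] '' Ioo a b ⊆ Ico (-1) 0) ∧
           (w i = true → f^[i] '' Ioo a b ⊆ Ioc 0 1)

/-- `critNeg fm fp n = f^n(0_-)`, the `n`-th left critical value. -/
def critNeg (fm fp : ℝ → ℝ) : ℕ → ℝ
  | 0 => 0
  | n + 1 => (lorenzGlue fm fp)^[n] (fm 0)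

/-- `critPos fm fp n = f^n(0_+)`, the `n`-th right critical value. -/
def critPos (fm fp : ℝ → ℝ) : ℕ → ℝ
  | 0 => 0
  | n + 1 => (lorenzGlue fm fp)^[n] (fp 0)

/-- `[a,b]` is a homterval of `f`: a maximal nondegenerate closed interval on whose
interior every iterate of `f` is monotone. -/
def IsHomterval (f : ℝ → ℝ) (a b : ℝ) : Prop :=
  -1 ≤ a ∧ a < b ∧ b ≤ 1 ∧ (∀ n, noCut f n (Ioo a b)) ∧
  ∀ a' b' : ℝ, -1 ≤ a' → b' ≤ 1 → a' ≤ a → b ≤ b' → (∀ n, noCut f n (Ioo a' b')) →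
    a' = a ∧ b' = b

/-- `(p,q,f^a,f^b)` is a renormalization of the Lorenz map `(fm,fp)` : `p < 0 < q`
are periodic of periods `a`, `b`, `f^a`, `f^b` are monotone on `(p,0)`, `(0,q)` and map
them into `[p,q]`, and the induced map is the first return map to `(p,q)`. -/
def IsRenorm (fm fp : ℝ → ℝ) (p q : ℝ) (a b : ℕ) : Prop :=
  -1 ≤ p ∧ p < 0 ∧ 0 < q ∧ q ≤ 1 ∧ 0 < a ∧ 0 < b ∧
  (lorenzGlue fm fp)^[a] p = p ∧ (lorenzGlue fm fp)^[b] q = q ∧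
  noCut (lorenzGlue fm fp) a (Ioo p 0) ∧ noCut (lorenzGlue fm fp) b (Ioo 0 q) ∧
  MapsTo ((lorenzGlue fm fp)^[a]) (Ico p 0) (Icc p q) ∧
  MapsTo ((lorenzGlue fm fp)^[b]) (Ioc 0 q) (Icc p q) ∧
  (∀ x ∈ Ioo p 0, ∀ i, 0 < i → i < a → (lorenzGlue fm fp)^[i] x ∉ Ioo p q) ∧
  (∀ x ∈ Ioo 0 q, ∀ i, 0 < i → i < b → (lorenzGlue fm fp)^[i] x ∉ Ioo p q)

/-- The renormalization on `(p,q)` with periods `(a,b)` has combinatorial type `(α,β)`: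
`α` resp. `β` is the itinerary word of the branch containing `(p,0)` resp. `(0,q)`. -/
def RenormType (f : ℝ → ℝ) (p q : ℝ) (a b : ℕ) (α β : ℕ → Bool) : Prop :=
  (∀ i < a, (α i = false → f^[i] '' Ioo p 0 ⊆ Ico (-1) 0) ∧
            (α i = true → f^[i] '' Ioo p 0 ⊆ Ioc 0 1)) ∧
  (∀ i < b, (β i = false → f^[i] '' Ioo 0 q ⊆ Ico (-1) 0) ∧
            (β i = true → f^[i] '' Ioo 0 q ⊆ Ioc 0 1))

/-- Membership in the domain of renormalization `D_{α,β}`. -/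
def InDomain (fm fp : ℝ → ℝ) (a b : ℕ) (α β : ℕ → Bool) : Prop :=
  ∃ p q : ℝ, IsRenorm fm fp p q a b ∧ RenormType (lorenzGlue fm fp) p q a b α β

/-! The endpoints of the branches of `f^k`, `k ≤ n`, lie among `±1` and the points whose orbit
hits the discontinuity `0` by time `n`. On this finite set the itinerary (the signs of the orbit up
to time `n`) is injective and lexicographically increasing. Whether some point follows a given
sign pattern and then hits `0` depends only on the kneading data: the points following a pattern
form an interval that the iterate maps onto an interval bounded by `±1` or one-sided critical
values, so each further step only compares such values with `0`. Hence these endpoints of `f` and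
of `g` correspond bijectively with equal itineraries, so in an order preserving way; a piecewise
linear interpolation `h` of this correspondence carries branches to branches, and the word of a
branch is the itinerary of its left endpoint. -/

open Function
open SignType (sign)

section Development

variable {fm fp gm gp F G : ℝ → ℝ} {a b u u' v x y : ℝ} {d k m n N : ℕ}

lemma sign_eq_sign_of_iff (hpos : 0 < x ↔ 0 < y) (hzero : x = 0 ↔ y = 0) : sign x = sign y := by
  rcases lt_trichotomy y 0 with hy | hy | hy
  · have hx : x < 0 := lt_of_le_of_ne (not_lt.1 fun h => hy.not_gt (hpos.1 h))
      fun h => hy.ne (hzero.1 h)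
    rw [sign_neg hx, sign_neg hy]
  · rw [hzero.2 hy, hy]
  · rw [sign_pos (hpos.2 hy), sign_pos hy]

lemma image_Ioo_eq_of_mem_Icc {f : ℝ → ℝ} {c c' : ℝ} (hc : ContinuousOn f (Icc c c'))
    (hm : StrictMonoOn f (Icc c c')) (ha : a ∈ Icc c c') (hb : b ∈ Icc c c') :
    f '' Ioo a b = Ioo (f a) (f b) := by
  rcases le_or_gt a b with hab | hba
  · have hsub : Icc a b ⊆ Icc c c' := Icc_subset_Icc ha.1 hb.2
    exact (hc.mono hsub).image_Ioo_of_strictMonoOn hab (hm.mono hsub)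
  · simp [Ioo_eq_empty hba.not_gt, Ioo_eq_empty (hm hb ha hba).not_gt]

lemma lt_zero_of_continuousOn_Ico {φ : ℝ → ℝ} (hc : ContinuousOn φ (Ico a b))
    (h0 : ∀ x ∈ Ioo a b, φ x ≠ 0) (ha : φ a < 0) : ∀ x ∈ Ico a b, φ x < 0 := by
  intro x hx
  by_contra! hx0
  obtain ⟨z, hz, hz0⟩ :=
    intermediate_value_Icc hx.1 (hc.mono (Icc_subset_Ico_right hx.2)) ⟨ha.le, hx0⟩
  rcases hz.1.eq_or_lt with rfl | haz
  · exact ha.ne hz0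
  · exact h0 z ⟨haz, hz.2.trans_lt hx.2⟩ hz0

theorem Set.Finite.exists_strictMono_continuous_eqOn {s : Set ℝ} (hs : s.Finite) {φ : ℝ → ℝ}
    (hφ : StrictMonoOn φ s) : ∃ h : ℝ → ℝ, StrictMono h ∧ Continuous h ∧ EqOn h φ s := by
  classical
  lift s to Finset ℝ using hs
  induction s using Finset.induction_on_max with
  | empty => exact ⟨id, strictMono_id, continuous_id, by simp⟩
  | insert a t hlt ih =>
    obtain ⟨h, hmono, hcont, heq⟩ := ih (hφ.mono (by simp))
    rcases t.eq_empty_or_nonempty with rfl | hne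
    · refine ⟨fun x => x - a + φ a, fun x y hxy => by simpa using hxy, by fun_prop, ?_⟩
      simp
    -- extend `h` beyond the last node `m` of `t` by the chord from `(m, h m)` to `(a, φ a)`
    set m := t.max' hne
    have hmt : m ∈ t := t.max'_mem hne
    have hma : m < a := hlt m hmt
    have hc : 0 < (φ a - h m) / (a - m) := by
      refine div_pos (sub_pos.2 ?_) (sub_pos.2 hma)
      rw [heq hmt]
      exact hφ (by simp [hmt]) (by simp) hma
    refine ⟨fun x => h (min x m) + (φ a - h m) / (a - m) * (max x m - m), ?_, by fun_prop, ?_⟩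
    · intro x y hxy
      rcases lt_or_ge x m with hxm | hmx
      · have h1 : h (min x m) < h (min y m) := hmono (by simpa [hxm.le] using ⟨hxy, hxm⟩)
        have h2 : max x m - m ≤ max y m - m := by gcongr
        dsimp only
        nlinarith
      · simp only [min_eq_right hmx, min_eq_right (hmx.trans hxy.le), max_eq_left hmx,
          max_eq_left (hmx.trans hxy.le)]
        gcongr
    · intro x hx
      rcases Finset.mem_insert.1 hx with rfl | hxt
      · simp only [min_eq_right hma.le, max_eq_left hma.le]
        field_simp [(sub_pos.2 hma).ne']
        ring
      · have hxm : x ≤ m := t.le_max' x hxt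
        dsimp only
        rw [min_eq_left hxm, max_eq_right hxm, sub_self, mul_zero, add_zero]
        exact heq hxt

lemma lorenzGlue_of_neg (hx : x < 0) : lorenzGlue fm fp x = fm x := if_pos hx

lemma lorenzGlue_of_nonneg (hx : 0 ≤ x) : lorenzGlue fm fp x = fp x := if_neg hx.not_gt

lemma critNeg_succ {l : ℕ} (hl : l ≠ 0) :
    critNeg fm fp (l + 1) = lorenzGlue fm fp (critNeg fm fp l) := by
  obtain ⟨l, rfl⟩ := Nat.exists_eq_succ_of_ne_zero hl
  exact iterate_succ_apply' _ _ _

lemma critPos_eq_iterate (l : ℕ) : critPos fm fp l = (lorenzGlue fm fp)^[l] 0 := by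
  cases l with
  | zero => rfl
  | succ l => rw [iterate_succ_apply, lorenzGlue_of_nonneg le_rfl]; rfl

lemma critPos_succ (l : ℕ) : critPos fm fp (l + 1) = lorenzGlue fm fp (critPos fm fp l) := by
  rw [critPos_eq_iterate, critPos_eq_iterate, iterate_succ_apply']

namespace IsLorenzPair

lemma glue_neg_one (hF : IsLorenzPair fm fp) : lorenzGlue fm fp (-1) = -1 := by
  rw [lorenzGlue_of_neg (by norm_num)]
  exact hF.2.2.2.2.2.2.1

lemma glue_one (hF : IsLorenzPair fm fp) : lorenzGlue fm fp 1 = 1 := by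
  rw [lorenzGlue_of_nonneg zero_le_one]
  exact hF.2.2.2.2.2.2.2

lemma continuousOn_glue_Ico (hF : IsLorenzPair fm fp) :
    ContinuousOn (lorenzGlue fm fp) (Ico (-1) 0) :=
  (hF.1.mono Ico_subset_Icc_self).congr fun _ hx => lorenzGlue_of_neg hx.2

lemma strictMonoOn_glue_Ico (hF : IsLorenzPair fm fp) :
    StrictMonoOn (lorenzGlue fm fp) (Ico (-1) 0) := fun x hx y hy hxy => by
  rw [lorenzGlue_of_neg hx.2, lorenzGlue_of_neg hy.2]
  exact hF.2.2.1 (Ico_subset_Icc_self hx) (Ico_subset_Icc_self hy) hxy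

lemma continuousOn_glue_Icc (hF : IsLorenzPair fm fp) :
    ContinuousOn (lorenzGlue fm fp) (Icc 0 1) :=
  hF.2.1.congr fun _ hx => lorenzGlue_of_nonneg hx.1

lemma strictMonoOn_glue_Icc (hF : IsLorenzPair fm fp) :
    StrictMonoOn (lorenzGlue fm fp) (Icc 0 1) := fun x hx y hy hxy => by
  rw [lorenzGlue_of_nonneg hx.1, lorenzGlue_of_nonneg hy.1]
  exact hF.2.2.2.1 hx hy hxy

lemma mapsTo_glue (hF : IsLorenzPair fm fp) :
    MapsTo (lorenzGlue fm fp) (Icc (-1) 1) (Icc (-1) 1) := by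
  intro x hx
  rcases lt_or_ge x 0 with hx0 | hx0
  · rw [lorenzGlue_of_neg hx0]
    exact hF.2.2.2.2.1 ⟨hx.1, hx0.le⟩
  · rw [lorenzGlue_of_nonneg hx0]
    exact hF.2.2.2.2.2.1 ⟨hx0, hx.2⟩

lemma critNeg_mem (hF : IsLorenzPair fm fp) (l : ℕ) : critNeg fm fp l ∈ Icc (-1) 1 := by
  cases l with
  | zero => show (0 : ℝ) ∈ Icc (-1) 1; norm_num
  | succ l => exact (hF.mapsTo_glue.iterate l) (hF.2.2.2.2.1 ⟨by norm_num, le_rfl⟩)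

lemma critPos_mem (hF : IsLorenzPair fm fp) (l : ℕ) : critPos fm fp l ∈ Icc (-1) 1 := by
  rw [critPos_eq_iterate]
  exact hF.mapsTo_glue.iterate l ⟨by norm_num, zero_le_one⟩

lemma iterate_lt_iterate (hF : IsLorenzPair fm fp) (hx : x ∈ Icc (-1) 1) (hy : y ∈ Icc (-1) 1)
    (hxy : x < y) {i : ℕ}
    (hs : ∀ j < i, sign ((lorenzGlue fm fp)^[j] x) = sign ((lorenzGlue fm fp)^[j] y)) :
    (lorenzGlue fm fp)^[i] x < (lorenzGlue fm fp)^[i] y := by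
  induction i with
  | zero => exact hxy
  | succ i ih =>
    have hlt := ih fun j hj => hs j (by omega)
    have hxi := hF.mapsTo_glue.iterate i hx
    have hyi := hF.mapsTo_glue.iterate i hy
    rw [iterate_succ_apply', iterate_succ_apply']
    rcases lt_or_ge ((lorenzGlue fm fp)^[i] y) 0 with hy0 | hy0
    · exact hF.strictMonoOn_glue_Ico ⟨hxi.1, hlt.trans hy0⟩ ⟨hyi.1, hy0⟩ hlt
    · have hx0 : 0 ≤ (lorenzGlue fm fp)^[i] x := by
        rw [← sign_nonneg_iff, hs i (by omega)]
        exact sign_nonneg_iff.2 hy0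
      exact hF.strictMonoOn_glue_Icc ⟨hx0, hxi.2⟩ ⟨hy0, hyi.2⟩ hlt

end IsLorenzPair

def cutPoints (F : ℝ → ℝ) (k : ℕ) : Set ℝ := {x ∈ Icc (-1) 1 | ∃ i < k, F^[i] x = 0}

def branchEnds (F : ℝ → ℝ) (N : ℕ) : Set ℝ := insert (-1) (insert 1 (cutPoints F N))

lemma cutPoints_mono (hkN : k ≤ N) : cutPoints F k ⊆ cutPoints F N :=
  fun _ ⟨hx, i, hi, h0⟩ => ⟨hx, i, hi.trans_le hkN, h0⟩

lemma cutPoints_subset_branchEnds (hkN : k ≤ N) : cutPoints F k ⊆ branchEnds F N :=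
  (cutPoints_mono hkN).trans ((subset_insert _ _).trans (subset_insert _ _))

lemma branchEnds_subset_Icc : branchEnds F N ⊆ Icc (-1) 1 := by
  rintro x (rfl | rfl | hx)
  exacts [⟨le_rfl, by norm_num⟩, ⟨by norm_num, le_rfl⟩, hx.1]

lemma isLeast_branchEnds : IsLeast (branchEnds F N) (-1) :=
  ⟨mem_insert _ _, fun _ hx => (branchEnds_subset_Icc hx).1⟩

lemma isGreatest_branchEnds : IsGreatest (branchEnds F N) 1 :=
  ⟨mem_insert_of_mem _ (mem_insert _ _), fun _ hx => (branchEnds_subset_Icc hx).2⟩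

lemma noCut_iff_forall_notMem_cutPoints {S : Set ℝ} (hS : S ⊆ Icc (-1) 1) :
    noCut F k S ↔ ∀ x ∈ S, x ∉ cutPoints F k :=
  ⟨fun h x hx ⟨_, i, hi, h0⟩ => h x hx i hi h0, fun h x hx i hi h0 => h x hx ⟨hS hx, i, hi, h0⟩⟩

lemma IsLorenzPair.cutPoints_finite (hF : IsLorenzPair fm fp) (k : ℕ) :
    (cutPoints (lorenzGlue fm fp) k).Finite := by
  induction k with
  | zero => simp [cutPoints]
  | succ k ih =>
    -- a cut point of order `k + 1` is `0` or is mapped by one of the two injective branches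
    -- to a cut point of order `k`
    have hside (T : Set ℝ) (hinj : InjOn (lorenzGlue fm fp) T) :
        {x ∈ T | lorenzGlue fm fp x ∈ cutPoints (lorenzGlue fm fp) k}.Finite :=
      Finite.of_finite_image (ih.subset (image_subset_iff.2 fun _ hx => hx.2))
        (hinj.mono fun _ hx => hx.1)
    refine ((finite_singleton 0).union ((hside _ hF.strictMonoOn_glue_Ico.injOn).union
      (hside _ hF.strictMonoOn_glue_Icc.injOn))).subset ?_
    rintro x ⟨hx, i, hi, h0⟩
    cases i with
    | zero => exact Or.inl h0
    | succ j =>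
      have hFx : lorenzGlue fm fp x ∈ cutPoints (lorenzGlue fm fp) k :=
        ⟨hF.mapsTo_glue hx, j, by omega, by rwa [iterate_succ_apply] at h0⟩
      rcases lt_or_ge x 0 with hx0 | hx0
      exacts [Or.inr (Or.inl ⟨⟨hx.1, hx0⟩, hFx⟩), Or.inr (Or.inr ⟨⟨hx0, hx.2⟩, hFx⟩)]

lemma IsBranch.left_mem (hfin : (cutPoints F k).Finite) (hB : IsBranch F k a b) :
    a ∈ insert (-1) (cutPoints F k) := by
  obtain ⟨ha, hab, hb, hnc, hmax⟩ := hB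
  by_contra hmem
  simp only [mem_insert_iff, not_or] at hmem
  obtain ⟨l, hla, hl⟩ := exists_Ioc_subset_of_mem_nhds
    (hfin.isClosed.isOpen_compl.mem_nhds hmem.2) ⟨a - 1, by linarith⟩
  have hlt : max l (-1) < a := max_lt hla (lt_of_le_of_ne ha (Ne.symm hmem.1))
  refine hlt.ne (hmax _ b (le_max_right _ _) hb hlt.le le_rfl fun x hx i hi h0 => ?_).1
  rcases le_or_gt x a with hxa | hax
  · exact hl ⟨(le_max_left _ _).trans_lt hx.1, hxa⟩
      ⟨⟨(le_max_right _ _).trans hx.1.le, hx.2.le.trans hb⟩, i, hi, h0⟩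
  · exact hnc x ⟨hax, hx.2⟩ i hi h0

section Transport

variable {h : ℝ → ℝ} (hmono : StrictMonoOn h (Icc (-1) 1)) (himg : h '' Icc (-1) 1 = Icc (-1) 1)
  (hcut : h '' cutPoints F k = cutPoints G k)
include hmono himg hcut

lemma noCut_image_iff (ha : a ∈ Icc (-1) 1) (hb : b ∈ Icc (-1) 1) :
    noCut G k (Ioo (h a) (h b)) ↔ noCut F k (Ioo a b) := by
  have hha : h a ∈ Icc (-1) 1 := himg ▸ mem_image_of_mem h ha
  have hhb : h b ∈ Icc (-1) 1 := himg ▸ mem_image_of_mem h hb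
  rw [noCut_iff_forall_notMem_cutPoints (Ioo_subset_Icc_self.trans (Icc_subset_Icc hha.1 hhb.2)),
    noCut_iff_forall_notMem_cutPoints (Ioo_subset_Icc_self.trans (Icc_subset_Icc ha.1 hb.2)),
    ← hcut]
  constructor
  · intro hG x hx hxC
    exact hG (h x) ⟨hmono ha hxC.1 hx.1, hmono hxC.1 hb hx.2⟩ ⟨x, hxC, rfl⟩
  · rintro hF y hy ⟨x, hxC, rfl⟩
    exact hF x ⟨(hmono.lt_iff_lt ha hxC.1).1 hy.1, (hmono.lt_iff_lt hxC.1 hb).1 hy.2⟩ hxC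

lemma IsBranch.image (hB : IsBranch F k a b) : IsBranch G k (h a) (h b) := by
  obtain ⟨ha, hab, hb, hnc, hmax⟩ := hB
  have haI : a ∈ Icc (-1) 1 := ⟨ha, hab.le.trans hb⟩
  have hbI : b ∈ Icc (-1) 1 := ⟨ha.trans hab.le, hb⟩
  have hha : h a ∈ Icc (-1) 1 := himg ▸ mem_image_of_mem h haI
  have hhb : h b ∈ Icc (-1) 1 := himg ▸ mem_image_of_mem h hbI
  refine ⟨hha.1, hmono haI hbI hab, hhb.2,
    (noCut_image_iff hmono himg hcut haI hbI).2 hnc, fun a' b' ha' hb' haa hbb hc => ?_⟩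
  obtain ⟨x, hx, rfl⟩ : a' ∈ h '' Icc (-1) 1 := by rw [himg]; exact ⟨ha', haa.trans hha.2⟩
  obtain ⟨y, hy, rfl⟩ : b' ∈ h '' Icc (-1) 1 := by rw [himg]; exact ⟨hhb.1.trans hbb, hb'⟩
  have := hmax x y hx.1 hy.2 ((hmono.le_iff_le hx haI).1 haa) ((hmono.le_iff_le hbI hy).1 hbb)
    ((noCut_image_iff hmono himg hcut hx hy).1 hc)
  rw [this.1, this.2]
  exact ⟨rfl, rfl⟩

end Transport

lemma mapsTo_side {φ : ℝ → ℝ} (hc : ContinuousOn φ (Ico a b)) (hm : MonotoneOn φ (Ico a b))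
    (hmaps : MapsTo φ (Ico a b) (Icc (-1) 1)) (h0 : ∀ x ∈ Ioo a b, φ x ≠ 0) :
    (0 ≤ φ a → MapsTo φ (Ico a b) (Icc 0 1)) ∧ (φ a < 0 → MapsTo φ (Ico a b) (Ico (-1) 0)) :=
  ⟨fun ha _ hx => ⟨ha.trans (hm ⟨le_rfl, hx.1.trans_lt hx.2⟩ hx hx.1), (hmaps hx).2⟩,
    fun ha x hx => ⟨(hmaps hx).1, lt_zero_of_continuousOn_Ico hc h0 ha x hx⟩⟩

namespace IsLorenzPair

/-- The interval is taken half-open so that its left endpoint, possibly a cut point, counts. -/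
lemma continuousOn_strictMonoOn_iterate (hF : IsLorenzPair fm fp) (ha : -1 ≤ a) (hb : b ≤ 1)
    (hc : noCut (lorenzGlue fm fp) k (Ioo a b)) :
    ∀ j ≤ k, ContinuousOn (lorenzGlue fm fp)^[j] (Ico a b) ∧
      StrictMonoOn (lorenzGlue fm fp)^[j] (Ico a b) ∧
      MapsTo (lorenzGlue fm fp)^[j] (Ico a b) (Icc (-1) 1) := by
  intro j
  induction j with
  | zero => exact fun _ => ⟨continuousOn_id, strictMonoOn_id,
      fun x hx => ⟨ha.trans hx.1, hx.2.le.trans hb⟩⟩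
  | succ j ih =>
    intro hj
    obtain ⟨hcont, hmono, hmaps⟩ := ih (by omega)
    have hside := mapsTo_side hcont hmono.monotoneOn hmaps fun x hx => hc x hx j (by omega)
    rw [iterate_succ']
    refine (lt_or_ge ((lorenzGlue fm fp)^[j] a) 0).elim (fun hneg => ?_) fun hnn => ?_
    · exact ⟨hF.continuousOn_glue_Ico.comp hcont (hside.2 hneg),
        hF.strictMonoOn_glue_Ico.comp hmono (hside.2 hneg), hF.mapsTo_glue.comp hmaps⟩
    · exact ⟨hF.continuousOn_glue_Icc.comp hcont (hside.1 hnn),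
        hF.strictMonoOn_glue_Icc.comp hmono (hside.1 hnn), hF.mapsTo_glue.comp hmaps⟩

lemma hasWord_iff (hF : IsLorenzPair fm fp) (ha : -1 ≤ a) (hab : a < b) (hb : b ≤ 1)
    (hc : noCut (lorenzGlue fm fp) k (Ioo a b)) {w : ℕ → Bool} :
    HasWord (lorenzGlue fm fp) k a b w ↔
      ∀ i < k, (w i = true ↔ 0 ≤ (lorenzGlue fm fp)^[i] a) := by
  have hside : ∀ i < k, ∀ x ∈ Ioo a b,
      (0 ≤ (lorenzGlue fm fp)^[i] a → (lorenzGlue fm fp)^[i] x ∈ Ioc 0 1) ∧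
      ((lorenzGlue fm fp)^[i] a < 0 → (lorenzGlue fm fp)^[i] x ∈ Ico (-1) 0) := by
    intro i hi x hx
    obtain ⟨hcont, hmono, hmaps⟩ := hF.continuousOn_strictMonoOn_iterate ha hb hc i hi.le
    have hside := mapsTo_side hcont hmono.monotoneOn hmaps fun x hx => hc x hx i hi
    have hx' : x ∈ Ico a b := Ioo_subset_Ico_self hx
    exact ⟨fun h => ⟨lt_of_le_of_ne (hside.1 h hx').1 (hc x hx i hi).symm, (hmaps hx').2⟩,
      fun h => hside.2 h hx'⟩
  have hmid : (a + b) / 2 ∈ Ioo a b := ⟨by linarith, by linarith⟩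
  constructor
  · intro hw i hi
    have hx := hside i hi _ hmid
    cases hwi : w i
    · have := (hw i hi).1 hwi (mem_image_of_mem _ hmid)
      simp only [Bool.false_eq_true, false_iff, not_le]
      exact not_le.1 fun h => (hx.1 h).1.not_gt this.2
    · have := (hw i hi).2 hwi (mem_image_of_mem _ hmid)
      simp only [true_iff]
      exact not_lt.1 fun h => (hx.2 h).2.not_gt this.1
  · intro hw i hi
    refine ⟨fun hwi => ?_, fun hwi => ?_⟩ <;> rintro _ ⟨x, hx, rfl⟩
    · exact (hside i hi x hx).2 (not_le.1 fun h => by simp [(hw i hi).2 h] at hwi)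
    · exact (hside i hi x hx).1 ((hw i hi).1 hwi)

end IsLorenzPair

def SameKneading (fm fp gm gp : ℝ → ℝ) (n : ℕ) : Prop :=
  ∀ i ≤ n, sign (critNeg fm fp i) = sign (critNeg gm gp i) ∧
    sign (critPos fm fp i) = sign (critPos gm gp i)

lemma SameKneading.symm (hK : SameKneading fm fp gm gp n) : SameKneading gm gp fm fp n :=
  fun i hi => ⟨(hK i hi).1.symm, (hK i hi).2.symm⟩

/-- Images of branches are bounded by `±1` and one-sided critical values; `CritPair` matches such
endpoints of the two maps, of order at most `d`. -/
def CritPair (fm fp gm gp : ℝ → ℝ) (d : ℕ) (u u' : ℝ) : Prop :=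
  (u = -1 ∧ u' = -1) ∨ (u = 1 ∧ u' = 1) ∨ ∃ l ≤ d,
    (u = critNeg fm fp l ∧ u' = critNeg gm gp l) ∨ (u = critPos fm fp l ∧ u' = critPos gm gp l)

namespace CritPair

lemma mem_Icc (hF : IsLorenzPair fm fp) (hG : IsLorenzPair gm gp)
    (h : CritPair fm fp gm gp d u u') : u ∈ Icc (-1) 1 ∧ u' ∈ Icc (-1) 1 := by
  have hm1 : (-1 : ℝ) ∈ Icc (-1) 1 := ⟨le_rfl, by norm_num⟩
  have h1 : (1 : ℝ) ∈ Icc (-1) 1 := ⟨by norm_num, le_rfl⟩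
  rcases h with ⟨rfl, rfl⟩ | ⟨rfl, rfl⟩ | ⟨l, -, ⟨rfl, rfl⟩ | ⟨rfl, rfl⟩⟩
  exacts [⟨hm1, hm1⟩, ⟨h1, h1⟩, ⟨hF.critNeg_mem l, hG.critNeg_mem l⟩,
    ⟨hF.critPos_mem l, hG.critPos_mem l⟩]

lemma sign_eq (hK : SameKneading fm fp gm gp n) (h : CritPair fm fp gm gp d u u')
    (hd : d ≤ n) : sign u = sign u' := by
  rcases h with ⟨rfl, rfl⟩ | ⟨rfl, rfl⟩ | ⟨l, hl, ⟨rfl, rfl⟩ | ⟨rfl, rfl⟩⟩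
  exacts [rfl, rfl, (hK l (hl.trans hd)).1, (hK l (hl.trans hd)).2]

lemma glue (hF : IsLorenzPair fm fp) (hG : IsLorenzPair gm gp)
    (h : CritPair fm fp gm gp d u u') (hu : u ≠ 0) :
    CritPair fm fp gm gp (d + 1) (lorenzGlue fm fp u) (lorenzGlue gm gp u') := by
  rcases h with ⟨rfl, rfl⟩ | ⟨rfl, rfl⟩ | ⟨l, hl, ⟨rfl, rfl⟩ | ⟨rfl, rfl⟩⟩
  · exact Or.inl ⟨hF.glue_neg_one, hG.glue_neg_one⟩
  · exact Or.inr (Or.inl ⟨hF.glue_one, hG.glue_one⟩)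
  · have hl0 : l ≠ 0 := by rintro rfl; exact hu rfl
    exact Or.inr (Or.inr ⟨l + 1, by omega,
      Or.inl ⟨(critNeg_succ hl0).symm, (critNeg_succ hl0).symm⟩⟩)
  · exact Or.inr (Or.inr ⟨l + 1, by omega, Or.inr ⟨(critPos_succ l).symm, (critPos_succ l).symm⟩⟩)

variable (hF : IsLorenzPair fm fp) (hG : IsLorenzPair gm gp) (hK : SameKneading fm fp gm gp n)
include hF hG hK

/-- Clipping at `0` brings in the critical value `fm 0 = f(0-)`. -/
lemma left (h : CritPair fm fp gm gp d u u') (hd : d ≤ n) :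
    CritPair fm fp gm gp (d + 1) (fm (min u 0)) (gm (min u' 0)) := by
  rcases lt_or_ge u 0 with hu | hu
  · have hu' : u' < 0 := by rw [← sign_eq_neg_one_iff, ← h.sign_eq hK hd, sign_neg hu]
    rw [min_eq_left hu.le, min_eq_left hu'.le, ← lorenzGlue_of_neg (fm := fm) (fp := fp) hu,
      ← lorenzGlue_of_neg (fm := gm) (fp := gp) hu']
    exact h.glue hF hG hu.ne
  · have hu' : 0 ≤ u' := by rw [← sign_nonneg_iff, ← h.sign_eq hK hd, sign_nonneg_iff]; exact hu
    rw [min_eq_right hu, min_eq_right hu']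
    exact Or.inr (Or.inr ⟨1, by omega, Or.inl ⟨rfl, rfl⟩⟩)

lemma right (h : CritPair fm fp gm gp d u u') (hd : d ≤ n) :
    CritPair fm fp gm gp (d + 1) (fp (max u 0)) (gp (max u' 0)) := by
  rcases lt_or_ge 0 u with hu | hu
  · have hu' : 0 < u' := by rw [← sign_eq_one_iff, ← h.sign_eq hK hd, sign_pos hu]
    rw [max_eq_left hu.le, max_eq_left hu'.le, ← lorenzGlue_of_nonneg (fm := fm) (fp := fp) hu.le,
      ← lorenzGlue_of_nonneg (fm := gm) (fp := gp) hu'.le]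
    exact h.glue hF hG hu.ne'
  · have hu' : u' ≤ 0 := by rw [← sign_nonpos_iff, ← h.sign_eq hK hd, sign_nonpos_iff]; exact hu
    rw [max_eq_right hu, max_eq_right hu']
    exact Or.inr (Or.inr ⟨1, by omega, Or.inr ⟨rfl, rfl⟩⟩)

end CritPair

def FollowsToCut (F : ℝ → ℝ) (s : ℕ → SignType) (m : ℕ) (x : ℝ) : Prop :=
  (∀ j < m, sign (F^[j] x) = s j) ∧ F^[m] x = 0

lemma followsToCut_zero {s : ℕ → SignType} : FollowsToCut F s 0 x ↔ x = 0 := by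
  simp [FollowsToCut]

lemma followsToCut_succ {s : ℕ → SignType} :
    FollowsToCut F s (m + 1) x ↔ sign x = s 0 ∧ FollowsToCut F (fun j => s (j + 1)) m (F x) := by
  simp only [FollowsToCut, Nat.forall_lt_succ_left, iterate_zero_apply, iterate_succ_apply,
    and_assoc]

namespace IsLorenzPair

lemma exists_Ioo_neg_iff (hF : IsLorenzPair fm fp) (hu : -1 ≤ u) (hv : -1 ≤ v) {P : ℝ → Prop} :
    (∃ x ∈ Ioo u v, x < 0 ∧ P (lorenzGlue fm fp x)) ↔
      ∃ y ∈ Ioo (fm (min u 0)) (fm (min v 0)), P y := by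
  rw [← image_Ioo_eq_of_mem_Icc hF.1 hF.2.2.1 ⟨le_min hu (by norm_num), min_le_right _ _⟩
    ⟨le_min hv (by norm_num), min_le_right _ _⟩, exists_mem_image]
  refine exists_congr fun x => ⟨fun ⟨hx, hx0, hP⟩ => ?_, fun ⟨hx, hP⟩ => ?_⟩
  · exact ⟨⟨min_lt_of_left_lt hx.1, lt_min hx.2 hx0⟩, by rwa [lorenzGlue_of_neg hx0] at hP⟩
  · have hx0 : x < 0 := hx.2.trans_le (min_le_right _ _)
    exact ⟨⟨(min_lt_iff.1 hx.1).resolve_right hx0.not_gt, hx.2.trans_le (min_le_left _ _)⟩,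
      hx0, by rwa [lorenzGlue_of_neg hx0]⟩

lemma exists_Ioo_pos_iff (hF : IsLorenzPair fm fp) (hu : u ≤ 1) (hv : v ≤ 1) {P : ℝ → Prop} :
    (∃ x ∈ Ioo u v, 0 < x ∧ P (lorenzGlue fm fp x)) ↔
      ∃ y ∈ Ioo (fp (max u 0)) (fp (max v 0)), P y := by
  rw [← image_Ioo_eq_of_mem_Icc hF.2.1 hF.2.2.2.1 ⟨le_max_right _ _, max_le hu zero_le_one⟩
    ⟨le_max_right _ _, max_le hv zero_le_one⟩, exists_mem_image]
  refine exists_congr fun x => ⟨fun ⟨hx, hx0, hP⟩ => ?_, fun ⟨hx, hP⟩ => ?_⟩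
  · exact ⟨⟨max_lt hx.1 hx0, lt_max_of_lt_left hx.2⟩, by rwa [lorenzGlue_of_nonneg hx0.le] at hP⟩
  · have hx0 : 0 < x := (le_max_right _ _).trans_lt hx.1
    exact ⟨⟨(le_max_left _ _).trans_lt hx.1, (lt_max_iff.1 hx.2).resolve_right hx0.not_gt⟩,
      hx0, by rwa [lorenzGlue_of_nonneg hx0.le]⟩

end IsLorenzPair

/-- Each step replaces `(u, v)` by its image under the branch selected by `s 0`, whose endpoints
again correspond (`CritPair.left`, `CritPair.right`). -/
theorem exists_followsToCut_iff (hF : IsLorenzPair fm fp) (hG : IsLorenzPair gm gp)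
    (hK : SameKneading fm fp gm gp n) (m : ℕ) :
    ∀ (s : ℕ → SignType) (d : ℕ) (u u' v v' : ℝ), (∀ j < m, s j ≠ 0) →
      CritPair fm fp gm gp d u u' → CritPair fm fp gm gp d v v' → d + m ≤ n →
      ((∃ x ∈ Ioo u v, FollowsToCut (lorenzGlue fm fp) s m x) ↔
        ∃ y ∈ Ioo u' v', FollowsToCut (lorenzGlue gm gp) s m y) := by
  induction m with
  | zero =>
    intro s d u u' v v' _ hu hv hd
    simp only [followsToCut_zero, exists_eq_right, mem_Ioo, ← sign_eq_neg_one_iff,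
      ← sign_eq_one_iff, hu.sign_eq hK (by omega), hv.sign_eq hK (by omega)]
  | succ m ih =>
    intro s d u u' v v' hs hu hv hd
    have hs' : ∀ j < m, s (j + 1) ≠ 0 := fun j hj => hs (j + 1) (by omega)
    obtain ⟨huI, hu'I⟩ := hu.mem_Icc hF hG
    obtain ⟨hvI, hv'I⟩ := hv.mem_Icc hF hG
    rcases (s 0).trichotomy with h0 | h0 | h0
    · simp only [followsToCut_succ, h0, sign_eq_neg_one_iff]
      rw [hF.exists_Ioo_neg_iff huI.1 hvI.1, hG.exists_Ioo_neg_iff hu'I.1 hv'I.1]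
      exact ih _ (d + 1) _ _ _ _ hs' (hu.left hF hG hK (by omega)) (hv.left hF hG hK (by omega))
        (by omega)
    · exact absurd h0 (hs 0 (by omega))
    · simp only [followsToCut_succ, h0, sign_eq_one_iff]
      rw [hF.exists_Ioo_pos_iff huI.2 hvI.2, hG.exists_Ioo_pos_iff hu'I.2 hv'I.2]
      exact ih _ (d + 1) _ _ _ _ hs' (hu.right hF hG hK (by omega)) (hv.right hF hG hK (by omega))
        (by omega)

def itinerary (F : ℝ → ℝ) (N : ℕ) (x : ℝ) : Fin N → SignType := fun i => sign (F^[i] x)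

namespace IsLorenzPair

lemma monotoneOn_itinerary (hF : IsLorenzPair fm fp) :
    MonotoneOn (fun x => toLex (itinerary (lorenzGlue fm fp) N x)) (Icc (-1) 1) := by
  intro x hx y hy hxy
  refine not_lt.1 fun ⟨i, hi, hlt⟩ => ?_
  rcases hxy.eq_or_lt with rfl | hxy
  · exact lt_irrefl _ hlt
  have := hF.iterate_lt_iterate hx hy hxy (i := i) fun j hj => (hi ⟨j, by omega⟩ hj).symm
  exact hlt.not_ge (SignType.sign.monotone this.le)

lemma injOn_itinerary (hF : IsLorenzPair fm fp) (hN : 0 < N) :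
    InjOn (itinerary (lorenzGlue fm fp) N) (branchEnds (lorenzGlue fm fp) N) := by
  suffices key : ∀ x ∈ branchEnds (lorenzGlue fm fp) N, ∀ y ∈ branchEnds (lorenzGlue fm fp) N,
      x < y → itinerary (lorenzGlue fm fp) N x ≠ itinerary (lorenzGlue fm fp) N y by
    intro x hx y hy hxy
    rcases lt_trichotomy x y with h | h | h
    exacts [absurd hxy (key x hx y hy h), h, absurd hxy.symm (key y hy x hx h)]
  intro x hx y hy hxy heq
  have hsign (j : ℕ) (hj : j < N) :
      sign ((lorenzGlue fm fp)^[j] x) = sign ((lorenzGlue fm fp)^[j] y) :=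
    congrFun heq ⟨j, hj⟩
  have hlt (j : ℕ) (hj : j < N) :=
    hF.iterate_lt_iterate (branchEnds_subset_Icc hx) (branchEnds_subset_Icc hy) hxy
      fun i hi => hsign i (hi.trans hj)
  have hzero (j : ℕ) (hj : j < N) :
      (lorenzGlue fm fp)^[j] x = 0 ↔ (lorenzGlue fm fp)^[j] y = 0 := by
    rw [← sign_eq_zero_iff, hsign j hj, sign_eq_zero_iff]
  -- if one orbit hits `0` at time `j`, so does the other, contradicting `hlt j`
  have hcut : ∀ j < N, (lorenzGlue fm fp)^[j] x ≠ 0 ∧ (lorenzGlue fm fp)^[j] y ≠ 0 :=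
    fun j hj => ⟨fun h0 => (hlt j hj).ne (h0.trans ((hzero j hj).1 h0).symm),
      fun h0 => (hlt j hj).ne (((hzero j hj).2 h0).trans h0.symm)⟩
  have hx' : x = -1 := by
    rcases hx with h | h | ⟨-, j, hj, h0⟩
    exacts [h, absurd (branchEnds_subset_Icc hy).2 (h ▸ hxy).not_ge, absurd h0 (hcut j hj).1]
  have hy' : y = 1 := by
    rcases hy with h | h | ⟨-, j, hj, h0⟩
    exacts [absurd (branchEnds_subset_Icc hx).1 (h ▸ hxy).not_ge, h, absurd h0 (hcut j hj).2]
  have := hsign 0 hN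
  norm_num [hx', hy'] at this

lemma strictMonoOn_itinerary (hF : IsLorenzPair fm fp) (hN : 0 < N) :
    StrictMonoOn (fun x => toLex (itinerary (lorenzGlue fm fp) N x))
      (branchEnds (lorenzGlue fm fp) N) :=
  (hF.monotoneOn_itinerary.mono branchEnds_subset_Icc).strictMonoOn_of_injOn
    fun _ hx _ hy h => hF.injOn_itinerary hN hx hy (toLex_inj.1 h)

lemma branchEnds_finite (hF : IsLorenzPair fm fp) (N : ℕ) :
    (branchEnds (lorenzGlue fm fp) N).Finite :=
  ((hF.cutPoints_finite N).insert _).insert _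

end IsLorenzPair

/-- A cut point of first order `m` is matched by a point following the same sign pattern for `g`
up to time `m`; afterwards both orbits are those of `0+`. -/
theorem exists_itinerary_eq (hF : IsLorenzPair fm fp) (hG : IsLorenzPair gm gp)
    (hK : SameKneading fm fp gm gp n) (hx : x ∈ branchEnds (lorenzGlue fm fp) (n + 1)) :
    ∃ y ∈ branchEnds (lorenzGlue gm gp) (n + 1),
      itinerary (lorenzGlue gm gp) (n + 1) y = itinerary (lorenzGlue fm fp) (n + 1) x := by
  classical
  rcases hx with rfl | rfl | ⟨hxI, hcut⟩
  · refine ⟨-1, mem_insert _ _, funext fun i => ?_⟩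
    simp only [itinerary, iterate_fixed hF.glue_neg_one, iterate_fixed hG.glue_neg_one]
  · refine ⟨1, mem_insert_of_mem _ (mem_insert _ _), funext fun i => ?_⟩
    simp only [itinerary, iterate_fixed hF.glue_one, iterate_fixed hG.glue_one]
  obtain ⟨hmn, hm0⟩ := Nat.find_spec hcut
  set m := Nat.find hcut
  have hmin : ∀ j < m, (lorenzGlue fm fp)^[j] x ≠ 0 :=
    fun j hj h0 => Nat.find_min hcut hj ⟨by omega, h0⟩
  have hxI' : x ∈ Ioo (-1) 1 := by
    refine ⟨lt_of_le_of_ne hxI.1 ?_, lt_of_le_of_ne hxI.2 ?_⟩ <;> rintro rfl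
    · simp [iterate_fixed hF.glue_neg_one] at hm0
    · simp [iterate_fixed hF.glue_one] at hm0
  obtain ⟨y, hy, hyf⟩ := (exists_followsToCut_iff hF hG hK m
    (fun j => sign ((lorenzGlue fm fp)^[j] x)) 0 (-1) (-1) 1 1
    (fun j hj => sign_ne_zero.2 (hmin j hj)) (Or.inl ⟨rfl, rfl⟩) (Or.inr (Or.inl ⟨rfl, rfl⟩))
    (by omega)).1 ⟨x, hxI', fun _ _ => rfl, hm0⟩
  refine ⟨y, mem_insert_of_mem _ (mem_insert_of_mem _ ⟨Ioo_subset_Icc_self hy, m, hmn, hyf.2⟩),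
    funext fun i => ?_⟩
  rcases lt_or_ge (i : ℕ) m with him | him
  · exact hyf.1 i him
  have hfx : (lorenzGlue fm fp)^[i] x = critPos fm fp (i - m) := by
    rw [critPos_eq_iterate, ← hm0, ← iterate_add_apply, Nat.sub_add_cancel him]
  have hgy : (lorenzGlue gm gp)^[i] y = critPos gm gp (i - m) := by
    rw [critPos_eq_iterate, ← hyf.2, ← iterate_add_apply, Nat.sub_add_cancel him]
  simp only [itinerary, hfx, hgy]
  exact (hK (i - m) (by omega)).2.symm

/-- `h` interpolates the itinerary-preserving bijection between branch endpoints, which is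
increasing because itineraries are lexicographically monotone. -/
theorem exists_strictMono_itinerary_eq (hF : IsLorenzPair fm fp) (hG : IsLorenzPair gm gp)
    (hK : SameKneading fm fp gm gp n) :
    ∃ h : ℝ → ℝ, StrictMono h ∧ Continuous h ∧ h (-1) = -1 ∧ h 1 = 1 ∧
      h '' branchEnds (lorenzGlue fm fp) (n + 1) = branchEnds (lorenzGlue gm gp) (n + 1) ∧
      ∀ x ∈ branchEnds (lorenzGlue fm fp) (n + 1),
        itinerary (lorenzGlue gm gp) (n + 1) (h x) = itinerary (lorenzGlue fm fp) (n + 1) x := by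
  set EF := branchEnds (lorenzGlue fm fp) (n + 1)
  set EG := branchEnds (lorenzGlue gm gp) (n + 1)
  set φ : ℝ → ℝ := fun x =>
    invFunOn (itinerary (lorenzGlue gm gp) (n + 1)) EG (itinerary (lorenzGlue fm fp) (n + 1) x)
  have hφ (x) (hx : x ∈ EF) : φ x ∈ EG ∧
      itinerary (lorenzGlue gm gp) (n + 1) (φ x) = itinerary (lorenzGlue fm fp) (n + 1) x :=
    invFunOn_pos (exists_itinerary_eq hF hG hK hx)
  have hφmono : StrictMonoOn φ EF := fun x hx y hy hxy => by
    have hlt := hF.strictMonoOn_itinerary n.succ_pos hx hy hxy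
    simp only [← (hφ x hx).2, ← (hφ y hy).2] at hlt
    exact hG.monotoneOn_itinerary.reflect_lt (branchEnds_subset_Icc (hφ x hx).1)
      (branchEnds_subset_Icc (hφ y hy).1) hlt
  obtain ⟨h, hmono, hcont, heq⟩ := (hF.branchEnds_finite _).exists_strictMono_continuous_eqOn hφmono
  have himg : h '' EF = EG := by
    refine heq.image_eq.trans (Subset.antisymm (image_subset_iff.2 fun x hx => (hφ x hx).1)
      fun y hy => ?_)
    obtain ⟨x, hx, hxy⟩ := exists_itinerary_eq hG hF hK.symm hy
    exact ⟨x, hx, hG.injOn_itinerary n.succ_pos (hφ x hx).1 hy ((hφ x hx).2.trans hxy)⟩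
  refine ⟨h, hmono, hcont, ?_, ?_, himg, fun x hx => (heq hx ▸ hφ x hx).2⟩
  · have := hmono.monotone.map_isLeast (isLeast_branchEnds (F := lorenzGlue fm fp) (N := n + 1))
    rw [himg] at this
    exact this.unique isLeast_branchEnds
  · have := hmono.monotone.map_isGreatest
      (isGreatest_branchEnds (F := lorenzGlue fm fp) (N := n + 1))
    rw [himg] at this
    exact this.unique isGreatest_branchEnds

lemma image_cutPoints {h : ℝ → ℝ} (hk : k ≤ N) (himg : h '' branchEnds F N = branchEnds G N)
    (hitin : ∀ x ∈ branchEnds F N, itinerary G N (h x) = itinerary F N x) :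
    h '' cutPoints F k = cutPoints G k := by
  have hzero (x) (hx : x ∈ branchEnds F N) (i) (hi : i < k) : G^[i] (h x) = 0 ↔ F^[i] x = 0 := by
    have := congrFun (hitin x hx) ⟨i, by omega⟩
    simp only [itinerary] at this
    rw [← sign_eq_zero_iff, this, sign_eq_zero_iff]
  ext y
  constructor
  · rintro ⟨x, hxC, rfl⟩
    have hx := cutPoints_subset_branchEnds hk hxC
    obtain ⟨-, i, hi, h0⟩ := hxC
    exact ⟨branchEnds_subset_Icc (himg ▸ mem_image_of_mem h hx), i, hi, (hzero x hx i hi).2 h0⟩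
  · intro hyC
    obtain ⟨x, hx, rfl⟩ : y ∈ h '' branchEnds F N := himg ▸ cutPoints_subset_branchEnds hk hyC
    obtain ⟨-, i, hi, h0⟩ := hyC
    exact ⟨x, ⟨branchEnds_subset_Icc hx, i, hi, (hzero x hx i hi).1 h0⟩, rfl⟩

end Development

/-- **Lemma 2.1 (combinatorial rigidity).** If two Lorenz maps have the same kneading data up
to time `n` (the sides of the critical orbits, and their vanishing, agree up to time `n`)
then there is an orientation preserving homeomorphism of `[-1,1]` carrying branches of
`f^k` to branches of `g^k` with the same itinerary words, for all `k ≤ n`. -/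
theorem kneading_implies_branch_homeo
    (fm fp gm gp : ℝ → ℝ) (hF : IsLorenzPair fm fp) (hG : IsLorenzPair gm gp) (n : ℕ)
    (hKneg : ∀ i ≤ n, (0 < critNeg fm fp i ↔ 0 < critNeg gm gp i) ∧
      (critNeg fm fp i = 0 ↔ critNeg gm gp i = 0))
    (hKpos : ∀ i ≤ n, (0 < critPos fm fp i ↔ 0 < critPos gm gp i) ∧
      (critPos fm fp i = 0 ↔ critPos gm gp i = 0)) :
    ∃ h : ℝ → ℝ, ContinuousOn h (Icc (-1) 1) ∧ StrictMonoOn h (Icc (-1) 1) ∧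
      h '' Icc (-1) 1 = Icc (-1) 1 ∧ h (-1) = -1 ∧ h 1 = 1 ∧
      ∀ k ≤ n, ∀ a b : ℝ, IsBranch (lorenzGlue fm fp) k a b →
        IsBranch (lorenzGlue gm gp) k (h a) (h b) ∧
        ∀ w : ℕ → Bool, HasWord (lorenzGlue fm fp) k a b w →
          HasWord (lorenzGlue gm gp) k (h a) (h b) w := by
  have hK : SameKneading fm fp gm gp n := fun i hi =>
    ⟨sign_eq_sign_of_iff (hKneg i hi).1 (hKneg i hi).2,
      sign_eq_sign_of_iff (hKpos i hi).1 (hKpos i hi).2⟩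
  obtain ⟨h, hmono, hcont, hm1, h1, himgE, hitin⟩ := exists_strictMono_itinerary_eq hF hG hK
  have himg : h '' Icc (-1) 1 = Icc (-1) 1 := by
    rw [hcont.image_Icc_of_strictMono hmono, hm1, h1]
  refine ⟨h, hcont.continuousOn, hmono.strictMonoOn _, himg, hm1, h1, fun k hk a b hB => ?_⟩
  have hB' := hB.image (hmono.strictMonoOn _) himg (image_cutPoints (by omega) himgE hitin)
  refine ⟨hB', fun w hw => ?_⟩
  have ha : a ∈ branchEnds (lorenzGlue fm fp) (n + 1) :=
    insert_subset_insert ((cutPoints_mono (by omega)).trans (subset_insert _ _))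
      (hB.left_mem (hF.cutPoints_finite k))
  obtain ⟨ha1, hab, hb1, hc, -⟩ := hB
  obtain ⟨ha1', hab', hb1', hc', -⟩ := hB'
  rw [hF.hasWord_iff ha1 hab hb1 hc] at hw
  rw [hG.hasWord_iff ha1' hab' hb1' hc']
  intro i hi
  rw [hw i hi, ← sign_nonneg_iff, ← sign_nonneg_iff (a := (lorenzGlue gm gp)^[i] (h a))]
  exact iff_of_eq (congrArg _ (congrFun (hitin a ha) ⟨i, by omega⟩).symm)
end
end
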